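/- Assume {𝒢, ℋ} is a turn pair, where 𝒢 and ℋ are DAGs with the same skeleton G and G is a tree. Then there exist a DAG 𝒟 and nodes i', j' such that: (1) 𝒢 and 𝒟 are Markov equivalent; (2) i' → j' is an arrow of 𝒟; (3) the graph 𝒟_{i'←j'} obtained from 𝒟 by reversing i' → j' is a DAG; and (4) ℋ and 𝒟_{i'←j'} are Markov equivalent. -/

import Mathlib

open Classical

/-- A DAG on vertex type `V`: a directed graph (adjacency relation) with no directed cycles. -/
structure DAG (V : Type) where
  adj : V → V → Prop
  acyclic : ∀ v, ¬ Relation.TransGen adj v v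

namespace DAG

variable {V : Type}

/-- The skeleton of a DAG: the undirected graph obtained by forgetting directions. -/
def skeleton (D : DAG V) : SimpleGraph V where
  Adj i j := D.adj i j ∨ D.adj j i
  symm := by constructor; intro i j h; exact h.symm
  loopless := by
    constructor
    intro i h
    rcases h with h | h <;> exact D.acyclic i (Relation.TransGen.single h)

/-- The characteristic imset of a DAG, as a vector indexed by finite vertex sets
(coordinates on sets of size `< 2` are identically zero). -/
noncomputable def imset (D : DAG V) (S : Finset V) : ℝ :=
  if 2 ≤ S.card ∧ ∃ i ∈ S, ∀ j ∈ S, j ≠ i → D.adj j i then 1 else 0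

/-- `D.IsVStructure i j k` means `i → j ← k` is an induced subgraph of `D`
(`i` and `k` non-adjacent). -/
def IsVStructure (D : DAG V) (i j k : V) : Prop :=
  i ≠ k ∧ D.adj i j ∧ D.adj k j ∧ ¬ D.adj i k ∧ ¬ D.adj k i

end DAG

/-- Two DAGs are Markov equivalent iff they have the same skeleton and the same
v-structures. -/
def MarkovEquiv {V : Type} (D E : DAG V) : Prop :=
  D.skeleton = E.skeleton ∧ ∀ i j k, D.IsVStructure i j k ↔ E.IsVStructure i j k

/-- An arrow `i → j` of `D` is essential if it occurs in every DAG Markov equivalent to `D`. -/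
def DAG.Essential {V : Type} (D : DAG V) (i j : V) : Prop :=
  D.adj i j ∧ ∀ E : DAG V, MarkovEquiv D E → E.adj i j

/-- The characteristic imset polytope of an undirected graph `G`: the convex hull of the
characteristic imsets of all DAGs with skeleton `G`. -/
noncomputable def CIM {V : Type} (G : SimpleGraph V) : Set (Finset V → ℝ) :=
  convexHull ℝ { f | ∃ D : DAG V, D.skeleton = G ∧ f = D.imset }

/-- `conv(u,v)` is an edge (one-dimensional face) of `P`: there is a linear functional whose
maximum over `P` is attained exactly on the segment from `u` to `v`. -/
def IsPolytopeEdge {E : Type*} [AddCommGroup E] [Module ℝ E] (P : Set E) (u v : E) : Prop :=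
  u ≠ v ∧ ∃ φ : E →ₗ[ℝ] ℝ, (∀ x ∈ P, φ x ≤ φ u) ∧ ∀ x ∈ P, (φ x = φ u ↔ x ∈ segment ℝ u v)

/-- `P` is a simplex of dimension `d`: the convex hull of `d+1` affinely independent points. -/
def IsSimplexOfDim {E : Type*} [AddCommGroup E] [Module ℝ E] (P : Set E) (d : ℕ) : Prop :=
  ∃ pts : Fin (d + 1) → E, AffineIndependent ℝ pts ∧ P = convexHull ℝ (Set.range pts)

/-- The standard basis vector indexed by `S`. -/
noncomputable def eVec {V : Type} (S : Finset V) : Finset V → ℝ :=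
  fun T => if T = S then 1 else 0

/-- The pair `(D, E)` is a *turn pair* with respect to `(i, j, Si, Sj)`. -/
def IsTurnPairWrt {V : Type} (D E : DAG V) (i j : V) (Si Sj : Finset V) : Prop :=
  i ∉ Si ∧ j ∉ Si ∧ i ∉ Sj ∧ j ∉ Sj ∧
  D.imset {i, j} = 1 ∧
  (∀ S ⊆ Si, 1 ≤ S.card → D.imset (insert i S) = 1) ∧
  (∀ S ⊆ Sj, 1 ≤ S.card → D.imset (insert j S) = 1) ∧
  ((∃ x ∈ Si, ¬ D.skeleton.Adj j x) ∨ (∃ x ∈ Sj, ¬ D.skeleton.Adj i x)) ∧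
  E.imset = D.imset
      + (∑ T ∈ Si.powerset.filter (fun T : Finset V => ∃ x ∈ T, ¬ D.skeleton.Adj j x),
          eVec (insert i (insert j T)))
      - (∑ T ∈ Sj.powerset.filter (fun T : Finset V => ∃ x ∈ T, ¬ D.skeleton.Adj i x),
          eVec (insert i (insert j T)))

/-- The pair `(D, E)` is a *turn pair*. -/
def IsTurnPair {V : Type} (D E : DAG V) : Prop :=
  ∃ (i j : V) (Si Sj : Finset V), IsTurnPairWrt D E i j Si Sj


/-!
On a forest every collider `a → v ← b` is a v-structure, and the imset coordinate of the
triple `{v, a, b}` records exactly whether it is present. Reading the turn-pair formula on the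
triples `{i, j, t}` shows that `D` and `E` have the same imset on every set not containing both
ends of one tree edge `uw`, oriented `u → w` in `D` and `w → u` in `E`: either the turn reverses
`i → j`, or one of `S_i`, `S_j` is a singleton `{t}` and `uw` joins `t` to `i` or `j`.

Cutting the tree at the bridge `uw`, let `𝒟` be `E` on the side of `u` and `D` on the side of
`w`, joined by `u → w`; reversing that arc is the same gluing with `w → u`. A collider of `𝒟`
either lies within one side or uses the bridge, so `𝒟` is Markov equivalent to `D`, and its
reversal to `E`.
-/

open Relation Finset

theorem Finset.triple_eq_insert_insert_iff {V : Type} {i j t : V} {T : Finset V} (hi : i ∉ T)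
    (hj : j ∉ T) (hti : t ≠ i) (htj : t ≠ j) :
    ({i, j, t} : Finset V) = insert i (insert j T) ↔ T = {t} := by
  refine ⟨fun h => ?_, fun h => h ▸ rfl⟩
  ext x
  have hx := congrArg (x ∈ ·) h
  simp only [mem_insert, mem_singleton, eq_iff_iff] at hx ⊢
  refine ⟨fun hxT => ?_, fun hxt => by subst hxt; tauto⟩
  have : x ≠ i := fun h => hi (h ▸ hxT)
  have : x ≠ j := fun h => hj (h ▸ hxT)
  tauto

theorem SimpleGraph.IsBridge.eq_of_adj_of_reachable {V : Type} {G : SimpleGraph V} {u w a b : V}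
    (hbr : G.IsBridge s(u, w)) (hab : G.Adj a b) (ha : (G.deleteEdges {s(u, w)}).Reachable u a)
    (hb : ¬ (G.deleteEdges {s(u, w)}).Reachable u b) : a = u ∧ b = w := by
  have hedge : s(a, b) = s(u, w) := by
    by_contra hne
    exact hb (ha.trans (SimpleGraph.Adj.reachable (by simp [hab, hne])))
  rcases Sym2.eq_iff.mp hedge with h | ⟨rfl, rfl⟩
  · exact h
  · exact (hbr ha).elim

namespace DAG

variable {V : Type} {G : SimpleGraph V}

lemma adj_asymm (X : DAG V) {a b : V} (h : X.adj a b) : ¬ X.adj b a :=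
  fun h' => X.acyclic a ((TransGen.single h).tail h')

lemma adj_of_skeleton_eq {X : DAG V} (hX : X.skeleton = G) {a b : V} (h : X.adj a b) :
    G.Adj a b :=
  hX ▸ Or.inl h

lemma adj_or_adj_of_skeleton_eq {X : DAG V} (hX : X.skeleton = G) {a b : V} (h : G.Adj a b) :
    X.adj a b ∨ X.adj b a := by
  rw [← hX] at h; exact h

lemma imset_eq_one_iff (X : DAG V) (S : Finset V) :
    X.imset S = 1 ↔ 2 ≤ S.card ∧ ∃ i ∈ S, ∀ j ∈ S, j ≠ i → X.adj j i := by
  unfold imset; split_ifs with h <;> simp [h]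

lemma imset_eq_zero_or_one (X : DAG V) (S : Finset V) : X.imset S = 0 ∨ X.imset S = 1 := by
  unfold imset; split_ifs <;> simp

lemma imset_eq_zero_and_imset_eq_one {X Y : DAG V} {S T : Finset V}
    (h : Y.imset T = X.imset S + 1) : X.imset S = 0 ∧ Y.imset T = 1 := by
  rcases X.imset_eq_zero_or_one S with hX | hX <;> rcases Y.imset_eq_zero_or_one T with hY | hY <;>
    constructor <;> linarith

lemma skeleton_adj_of_imset_pair_eq_one (X : DAG V) {a b : V} (h : X.imset {a, b} = 1) :
    X.skeleton.Adj a b := by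
  obtain ⟨hcard, c, hc, hall⟩ := (X.imset_eq_one_iff _).mp h
  have hab : a ≠ b := by rintro rfl; simp at hcard
  rcases mem_insert.mp hc with rfl | hc
  · exact Or.inr (hall b (by simp) hab.symm)
  · obtain rfl := mem_singleton.mp hc
    exact Or.inl (hall a (by simp) hab)

lemma imset_triple_eq_one_iff (hG : G.CliqueFree 3) {X : DAG V} (hX : X.skeleton = G)
    {v a b : V} (ha : G.Adj v a) (hb : G.Adj v b) (hab : a ≠ b) :
    X.imset {v, a, b} = 1 ↔ X.adj a v ∧ X.adj b v := by
  have hnab : ¬ G.Adj a b := SimpleGraph.isIndepSet_neighborSet_of_triangleFree _ hG v ha hb hab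
  rw [imset_eq_one_iff, card_insert_of_notMem (by simp [ha.ne, hb.ne]), card_pair hab]
  constructor
  · rintro ⟨-, c, hc, hall⟩
    simp only [mem_insert, mem_singleton] at hc
    rcases hc with rfl | rfl | rfl
    · exact ⟨hall a (by simp) ha.ne', hall b (by simp) hb.ne'⟩
    · exact (hnab (adj_of_skeleton_eq hX (hall b (by simp) hab.symm)).symm).elim
    · exact (hnab (adj_of_skeleton_eq hX (hall a (by simp) hab))).elim
  · rintro ⟨hav, hbv⟩
    refine ⟨by norm_num, v, by simp, fun c hc hcv => ?_⟩
    simp only [mem_insert, mem_singleton] at hc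
    rcases hc with rfl | rfl | rfl
    exacts [(hcv rfl).elim, hav, hbv]

lemma isVStructure_iff (X : DAG V) (a v b : V) :
    X.IsVStructure a v b ↔ a ≠ b ∧ (X.adj a v ∧ X.adj b v) ∧ ¬ X.skeleton.Adj a b := by
  simp only [IsVStructure, skeleton, not_or]
  tauto

lemma markovEquiv_of_forall_collider_iff {X Y : DAG V} (hXY : X.skeleton = Y.skeleton)
    (h : ∀ v a b, a ≠ b → (X.adj a v ∧ X.adj b v ↔ Y.adj a v ∧ Y.adj b v)) :
    MarkovEquiv X Y := by
  refine ⟨hXY, fun a v b => ?_⟩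
  rw [isVStructure_iff, isVStructure_iff, hXY]
  exact and_congr_right fun hab => and_congr_left' (h v a b hab)

def SameCollidersOff (X Y : DAG V) (u w : V) : Prop :=
  ∀ v a b, a ≠ b → s(a, v) ≠ s(u, w) → s(b, v) ≠ s(u, w) →
    (X.adj a v ∧ X.adj b v ↔ Y.adj a v ∧ Y.adj b v)

lemma SameCollidersOff.symm {X Y : DAG V} {u w : V} (h : SameCollidersOff X Y u w) :
    SameCollidersOff Y X w u := fun v a b hab ha hb =>
  (h v a b hab (by rwa [Sym2.eq_swap (a := u)]) (by rwa [Sym2.eq_swap (a := u)])).symm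

lemma sameCollidersOff_of_imset_eq (hG : G.CliqueFree 3) {X Y : DAG V} (hX : X.skeleton = G)
    (hY : Y.skeleton = G) {u w : V} (huw : G.Adj u w)
    (h : ∀ S : Finset V, (u ∈ S → w ∉ S) → X.imset S = Y.imset S) :
    SameCollidersOff X Y u w := by
  intro v a b hab hau hbu
  by_cases hva : G.Adj v a
  swap
  · exact iff_of_false (fun h => hva (adj_of_skeleton_eq hX h.1).symm)
      (fun h => hva (adj_of_skeleton_eq hY h.1).symm)
  by_cases hvb : G.Adj v b
  swap
  · exact iff_of_false (fun h => hvb (adj_of_skeleton_eq hX h.2).symm)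
      (fun h => hvb (adj_of_skeleton_eq hY h.2).symm)
  rw [← imset_triple_eq_one_iff hG hX hva hvb hab, ← imset_triple_eq_one_iff hG hY hva hvb hab,
    h]
  have hnab : ¬ G.Adj a b :=
    SimpleGraph.isIndepSet_neighborSet_of_triangleFree _ hG v hva hvb hab
  intro hu hw
  simp only [Finset.mem_insert, Finset.mem_singleton] at hu hw
  rcases hu with rfl | rfl | rfl <;> rcases hw with rfl | rfl | rfl <;>
    simp_all [Sym2.eq_swap, SimpleGraph.adj_comm]

section Glue

variable (A : Set V) (X Y : DAG V) (u w : V)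

def glueAdj (a b : V) : Prop :=
  (a = u ∧ b = w) ∨ (a ∈ A ∧ b ∈ A ∧ X.adj a b) ∨ (a ∉ A ∧ b ∉ A ∧ Y.adj a b)

-- The only arc between `A` and its complement leaves `A`, so a path never re-enters `A`.
variable {A X Y u w} in
lemma transGen_glueAdj (hu : u ∈ A) (hw : w ∉ A) {a b : V}
    (h : TransGen (glueAdj A X Y u w) a b) :
    (a ∈ A ∧ b ∉ A) ∨ (a ∈ A ∧ b ∈ A ∧ TransGen X.adj a b) ∨
      (a ∉ A ∧ b ∉ A ∧ TransGen Y.adj a b) := by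
  induction h with
  | single h =>
    rcases h with ⟨rfl, rfl⟩ | ⟨ha, hb, h⟩ | ⟨ha, hb, h⟩
    exacts [Or.inl ⟨hu, hw⟩, Or.inr (Or.inl ⟨ha, hb, .single h⟩),
      Or.inr (Or.inr ⟨ha, hb, .single h⟩)]
  | tail _ hbc ih =>
    rcases hbc with ⟨rfl, rfl⟩ | ⟨hb, hc, h⟩ | ⟨hb, hc, h⟩ <;>
      rcases ih with ⟨ha, hb'⟩ | ⟨ha, hb', ih⟩ | ⟨ha, hb', ih⟩
    all_goals first
      | exact absurd hu hb' | exact absurd hb hb' | exact absurd hb' hb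
      | exact Or.inl ⟨ha, hw⟩ | exact Or.inl ⟨ha, hc⟩
      | exact Or.inr (Or.inl ⟨ha, hc, ih.tail h⟩) | exact Or.inr (Or.inr ⟨ha, hc, ih.tail h⟩)

variable {A u w}

def glue (hu : u ∈ A) (hw : w ∉ A) : DAG V where
  adj := glueAdj A X Y u w
  acyclic v h := by
    rcases transGen_glueAdj hu hw h with ⟨h₁, h₂⟩ | ⟨-, -, h⟩ | ⟨-, -, h⟩
    exacts [h₂ h₁, X.acyclic v h, Y.acyclic v h]

variable {X Y} (hu : u ∈ A) (hw : w ∉ A)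

lemma glue_compl_adj_iff {a b : V} :
    (glue Y X (A := Aᶜ) hw (fun h => h hu)).adj a b ↔
      (a = w ∧ b = u) ∨ ((glue X Y hu hw).adj a b ∧ ¬ (a = u ∧ b = w)) := by
  by_cases hab : a = u ∧ b = w
  · obtain ⟨rfl, rfl⟩ := hab
    simp [glue, glueAdj, hu, hw, ne_of_mem_of_not_mem hu hw]
  · simp only [glue, glueAdj, Set.mem_compl_iff, not_not, hab, false_or, not_false_eq_true,
      and_true]
    tauto

lemma adj_of_glue_adj (hX : X.skeleton = G) (hY : Y.skeleton = G) (huw : G.Adj u w) {a b : V}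
    (h : (glue X Y hu hw).adj a b) : G.Adj a b := by
  rcases h with ⟨rfl, rfl⟩ | ⟨-, -, h⟩ | ⟨-, -, h⟩
  exacts [huw, adj_of_skeleton_eq hX h, adj_of_skeleton_eq hY h]

variable (hcut : ∀ a b, G.Adj a b → a ∈ A → b ∉ A → a = u ∧ b = w)
include hcut

lemma glue_skeleton (hX : X.skeleton = G) (hY : Y.skeleton = G) (huw : G.Adj u w) :
    (glue X Y hu hw).skeleton = G := by
  ext a b
  refine ⟨fun h => h.elim (adj_of_glue_adj hu hw hX hY huw)
    (fun h => (adj_of_glue_adj hu hw hX hY huw h).symm), fun hab => ?_⟩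
  by_cases ha : a ∈ A <;> by_cases hb : b ∈ A
  · rcases adj_or_adj_of_skeleton_eq hX hab with h | h
    exacts [Or.inl (Or.inr (Or.inl ⟨ha, hb, h⟩)), Or.inr (Or.inr (Or.inl ⟨hb, ha, h⟩))]
  · obtain ⟨rfl, rfl⟩ := hcut a b hab ha hb
    exact Or.inl (Or.inl ⟨rfl, rfl⟩)
  · obtain ⟨rfl, rfl⟩ := hcut b a hab.symm hb ha
    exact Or.inr (Or.inl ⟨rfl, rfl⟩)
  · rcases adj_or_adj_of_skeleton_eq hY hab with h | h
    exacts [Or.inl (Or.inr (Or.inr ⟨ha, hb, h⟩)), Or.inr (Or.inr (Or.inr ⟨hb, ha, h⟩))]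

lemma glue_adj_iff_of_mem (hX : X.skeleton = G) {v : V} (hv : v ∈ A) (c : V) :
    (glue X Y hu hw).adj c v ↔ X.adj c v ∧ ¬ (c = w ∧ v = u) := by
  constructor
  · rintro (⟨-, rfl⟩ | ⟨hc, -, h⟩ | ⟨-, hv', -⟩)
    exacts [(hw hv).elim, ⟨h, fun h' => hw (h'.1 ▸ hc)⟩, (hv' hv).elim]
  · rintro ⟨h, hcv⟩
    by_cases hc : c ∈ A
    · exact Or.inr (Or.inl ⟨hc, hv, h⟩)
    · obtain ⟨rfl, rfl⟩ := hcut v c (adj_of_skeleton_eq hX h).symm hv hc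
      exact (hcv ⟨rfl, rfl⟩).elim

lemma glue_adj_iff_of_notMem (hY : Y.skeleton = G) {v : V} (hv : v ∉ A) (c : V) :
    (glue X Y hu hw).adj c v ↔ Y.adj c v ∨ (c = u ∧ v = w) := by
  constructor
  · rintro (h | ⟨-, hv', -⟩ | ⟨-, -, h⟩)
    exacts [Or.inr h, (hv hv').elim, Or.inl h]
  · rintro (h | h)
    · by_cases hc : c ∈ A
      · exact Or.inl (hcut c v (adj_of_skeleton_eq hY h) hc hv)
      · exact Or.inr (Or.inr ⟨hc, hv, h⟩)
    · exact Or.inl h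

lemma markovEquiv_glue (hX : X.skeleton = G) (hY : Y.skeleton = G) (huw : Y.adj u w)
    (hcol : SameCollidersOff X Y u w) : MarkovEquiv Y (glue X Y hu hw) := by
  refine markovEquiv_of_forall_collider_iff
    (by rw [glue_skeleton hu hw hcut hX hY (adj_of_skeleton_eq hY huw), hY]) fun v a b hab => ?_
  by_cases hv : v ∈ A
  swap
  · have hpar : ∀ c, (glue X Y hu hw).adj c v ↔ Y.adj c v := fun c => by
      rw [glue_adj_iff_of_notMem hu hw hcut hY hv]
      exact or_iff_left_of_imp fun ⟨hc, hv⟩ => hc ▸ hv ▸ huw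
    rw [hpar, hpar]
  rw [glue_adj_iff_of_mem hu hw hcut hX hv, glue_adj_iff_of_mem hu hw hcut hX hv]
  by_cases hwu : v = u ∧ (a = w ∨ b = w)
  · obtain ⟨rfl, rfl | rfl⟩ := hwu
    · exact iff_of_false (fun h => Y.adj_asymm huw h.1) (fun h => h.1.2 ⟨rfl, rfl⟩)
    · exact iff_of_false (fun h => Y.adj_asymm huw h.2) (fun h => h.2.2 ⟨rfl, rfl⟩)
  have hvw : v ≠ w := fun h => hw (h ▸ hv)
  have harm : ∀ c, c = a ∨ c = b → s(c, v) ≠ s(u, w) ∧ ¬ (c = w ∧ v = u) := by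
    rintro c (rfl | rfl) <;> simp only [ne_eq, Sym2.eq_iff] <;> tauto
  simp only [(harm a (.inl rfl)).2, (harm b (.inr rfl)).2, not_false_eq_true, and_true]
  exact (hcol v a b hab (harm a (.inl rfl)).1 (harm b (.inr rfl)).1).symm

end Glue

theorem exists_reversal_of_imset_eq (hG : G.IsAcyclic) {D E : DAG V} (hD : D.skeleton = G)
    (hE : E.skeleton = G) {u w : V} (huw : D.adj u w) (hwu : E.adj w u)
    (h : ∀ S : Finset V, (u ∈ S → w ∉ S) → E.imset S = D.imset S) :
    ∃ (𝒟 : DAG V) (i' j' : V), MarkovEquiv D 𝒟 ∧ 𝒟.adj i' j' ∧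
      ∃ R : DAG V,
        (∀ a b, R.adj a b ↔ ((a = j' ∧ b = i') ∨ (𝒟.adj a b ∧ ¬ (a = i' ∧ b = j')))) ∧
        MarkovEquiv E R := by
  have hGuw : G.Adj u w := adj_of_skeleton_eq hD huw
  have hbr : G.IsBridge s(u, w) := SimpleGraph.isAcyclic_iff_forall_adj_isBridge.mp hG hGuw
  set A : Set V := {v | (G.deleteEdges {s(u, w)}).Reachable u v}
  have hu : u ∈ A := SimpleGraph.Reachable.refl u
  have hw : w ∉ A := hbr
  have hcut : ∀ a b, G.Adj a b → a ∈ A → b ∉ A → a = u ∧ b = w :=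
    fun a b hab ha hb => hbr.eq_of_adj_of_reachable hab ha hb
  have hcut' : ∀ a b, G.Adj a b → a ∈ Aᶜ → b ∉ Aᶜ → a = w ∧ b = u :=
    fun a b hab ha hb => (hcut b a hab.symm (not_not.mp hb) ha).symm
  have hu' : u ∉ Aᶜ := fun h => h hu
  have hcol : SameCollidersOff E D u w :=
    sameCollidersOff_of_imset_eq (hG.cliqueFree le_rfl) hE hD hGuw h
  exact ⟨glue E D hu hw, u, w, markovEquiv_glue hu hw hcut hE hD huw hcol, Or.inl ⟨rfl, rfl⟩,
    glue D E (A := Aᶜ) hw hu', fun a b => glue_compl_adj_iff hu hw,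
    markovEquiv_glue hw hu' hcut' hD hE hwu hcol.symm⟩

end DAG

namespace IsTurnPairWrt

open DAG

variable {V : Type} {G : SimpleGraph V} {D E : DAG V} {i j : V} {Si Sj : Finset V}

lemma imset_eq (h : IsTurnPairWrt D E i j Si Sj) {S : Finset V}
    (hS : ∀ t ∈ Si ∪ Sj, ¬ {i, j, t} ⊆ S) : E.imset S = D.imset S := by
  obtain ⟨-, -, -, -, -, -, -, -, himset⟩ := h
  have hzero : ∀ Z ⊆ Si ∪ Sj, ∀ k, (∑ T ∈ Z.powerset.filter
      (fun T : Finset V => ∃ x ∈ T, ¬ D.skeleton.Adj k x), eVec (insert i (insert j T))) S = 0 := by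
    intro Z hZ k
    rw [Finset.sum_apply]
    refine Finset.sum_eq_zero fun T hT => if_neg ?_
    rintro rfl
    obtain ⟨hTZ, t, ht, -⟩ := by simpa only [mem_filter, mem_powerset] using hT
    exact hS t (hZ (hTZ ht)) (by simp [insert_subset_iff, ht])
  rw [himset, Pi.sub_apply, Pi.add_apply, hzero Si subset_union_left,
    hzero Sj subset_union_right, add_zero, sub_zero]

lemma imset_triple (h : IsTurnPairWrt D E i j Si Sj) {t : V} (hti : t ≠ i) (htj : t ≠ j) :
    E.imset {i, j, t} = D.imset {i, j, t} + (if t ∈ Si ∧ ¬ D.skeleton.Adj j t then 1 else 0)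
      - (if t ∈ Sj ∧ ¬ D.skeleton.Adj i t then 1 else 0) := by
  obtain ⟨hiSi, hjSi, hiSj, hjSj, -, -, -, -, himset⟩ := h
  have hsum : ∀ Z : Finset V, i ∉ Z → j ∉ Z → ∀ k, (∑ T ∈ Z.powerset.filter
      (fun T : Finset V => ∃ x ∈ T, ¬ D.skeleton.Adj k x), eVec (insert i (insert j T)))
        {i, j, t} = if t ∈ Z ∧ ¬ D.skeleton.Adj k t then 1 else 0 := by
    intro Z hiZ hjZ k
    rw [Finset.sum_apply]
    have hterm : ∀ T ∈ Z.powerset.filter (fun T : Finset V => ∃ x ∈ T, ¬ D.skeleton.Adj k x),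
        eVec (insert i (insert j T)) {i, j, t} = if T = {t} then 1 else 0 := by
      intro T hT
      have hTZ : T ⊆ Z := mem_powerset.mp (mem_filter.mp hT).1
      simp only [eVec, triple_eq_insert_insert_iff (fun h => hiZ (hTZ h)) (fun h => hjZ (hTZ h))
        hti htj]
    rw [sum_congr rfl hterm, sum_ite_eq']
    simp
  rw [himset, Pi.sub_apply, Pi.add_apply, hsum Si hiSi hjSi, hsum Sj hiSj hjSj]

lemma adj (h : IsTurnPairWrt D E i j Si Sj) (hD : D.skeleton = G) : G.Adj i j :=
  hD ▸ D.skeleton_adj_of_imset_pair_eq_one h.2.2.2.2.1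

lemma adj_of_mem_left (h : IsTurnPairWrt D E i j Si Sj) (hD : D.skeleton = G) {x : V}
    (hx : x ∈ Si) : G.Adj i x :=
  hD ▸ D.skeleton_adj_of_imset_pair_eq_one
    (h.2.2.2.2.2.1 {x} (singleton_subset_iff.2 hx) (by simp))

lemma adj_of_mem_right (h : IsTurnPairWrt D E i j Si Sj) (hD : D.skeleton = G) {y : V}
    (hy : y ∈ Sj) : G.Adj j y :=
  hD ▸ D.skeleton_adj_of_imset_pair_eq_one
    (h.2.2.2.2.2.2.1 {y} (singleton_subset_iff.2 hy) (by simp))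

variable (hG : G.CliqueFree 3) (hD : D.skeleton = G) (hE : E.skeleton = G)
include hG hD hE

lemma collider_of_mem_left (h : IsTurnPairWrt D E i j Si Sj) {x : V} (hx : x ∈ Si) :
    (E.adj j i ∧ E.adj x i) ∧ ¬ (D.adj j i ∧ D.adj x i) := by
  have hij := h.adj hD
  have hix := h.adj_of_mem_left hD hx
  have hxi : x ≠ i := fun e => h.1 (e ▸ hx)
  have hjx : j ≠ x := fun e => h.2.1 (e ▸ hx)
  have hnjx : ¬ G.Adj j x := SimpleGraph.isIndepSet_neighborSet_of_triangleFree _ hG i hij hix hjx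
  have hxSj : x ∉ Sj := fun hy => hnjx (h.adj_of_mem_right hD hy)
  have key := h.imset_triple hxi hjx.symm
  rw [if_pos ⟨hx, by rwa [hD]⟩, if_neg fun hc => hxSj hc.1, sub_zero] at key
  obtain ⟨hD0, hE1⟩ := imset_eq_zero_and_imset_eq_one key
  rw [imset_triple_eq_one_iff hG hE hij hix hjx] at hE1
  rw [← imset_triple_eq_one_iff hG hD hij hix hjx, hD0]
  exact ⟨hE1, zero_ne_one⟩

lemma collider_of_mem_right (h : IsTurnPairWrt D E i j Si Sj) {y : V} (hy : y ∈ Sj) :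
    (D.adj i j ∧ D.adj y j) ∧ ¬ (E.adj i j ∧ E.adj y j) := by
  have hji := (h.adj hD).symm
  have hjy := h.adj_of_mem_right hD hy
  have hiy : i ≠ y := fun e => h.2.2.1 (e ▸ hy)
  have hyj : y ≠ j := fun e => h.2.2.2.1 (e ▸ hy)
  have hniy : ¬ G.Adj i y := SimpleGraph.isIndepSet_neighborSet_of_triangleFree _ hG j hji hjy hiy
  have hySi : y ∉ Si := fun hx => hniy (h.adj_of_mem_left hD hx)
  have key := h.imset_triple hiy.symm hyj
  rw [if_neg fun hc => hySi hc.1, if_pos ⟨hy, by rwa [hD]⟩, add_zero] at key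
  obtain ⟨hE0, hD1⟩ := imset_eq_zero_and_imset_eq_one
    (X := E) (Y := D) (S := {i, j, y}) (T := {i, j, y}) (by linarith)
  rw [insert_comm] at hE0 hD1
  rw [imset_triple_eq_one_iff hG hD hji hjy hiy] at hD1
  rw [← imset_triple_eq_one_iff hG hE hji hjy hiy, hE0]
  exact ⟨hD1, zero_ne_one⟩

lemma left_eq_empty_and_right_eq_singleton (h : IsTurnPairWrt D E i j Si Sj)
    (hEij : E.adj i j) : Si = ∅ ∧ ∃ y, Sj = {y} := by
  have hSi : Si = ∅ := eq_empty_of_forall_notMem fun x hx =>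
    E.adj_asymm hEij (h.collider_of_mem_left hG hD hE hx).1.1
  obtain ⟨y, hy⟩ : Sj.Nonempty := by
    obtain ⟨-, -, -, -, -, -, -, ⟨x, hx, -⟩ | ⟨y, hy, -⟩, -⟩ := h
    exacts [(notMem_empty x (hSi ▸ hx)).elim, ⟨y, hy⟩]
  refine ⟨hSi, y, eq_singleton_iff_unique_mem.2 ⟨hy, fun y' hy' => by_contra fun hne => ?_⟩⟩
  have hDc : D.imset {j, y, y'} = 1 :=
    h.2.2.2.2.2.2.1 {y, y'} (insert_subset hy (singleton_subset_iff.2 hy')) (by simp)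
  have hi : i ∉ ({j, y, y'} : Finset V) := by
    simp only [mem_insert, mem_singleton, not_or]
    exact ⟨(h.adj hD).ne, fun e => h.2.2.1 (e ▸ hy), fun e => h.2.2.1 (e ▸ hy')⟩
  have hEc : E.imset {j, y, y'} = 1 := by
    rw [h.imset_eq fun t _ hsub => hi (hsub (mem_insert_self i _)), hDc]
  rw [imset_triple_eq_one_iff hG hE (h.adj_of_mem_right hD hy) (h.adj_of_mem_right hD hy')
    (Ne.symm hne)] at hEc
  exact (h.collider_of_mem_right hG hD hE hy).2 ⟨hEij, hEc.1⟩

lemma right_eq_empty_and_left_eq_singleton (h : IsTurnPairWrt D E i j Si Sj)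
    (hDji : D.adj j i) : Sj = ∅ ∧ ∃ x, Si = {x} := by
  have hSj : Sj = ∅ := eq_empty_of_forall_notMem fun y hy =>
    D.adj_asymm hDji (h.collider_of_mem_right hG hD hE hy).1.1
  obtain ⟨x, hx⟩ : Si.Nonempty := by
    obtain ⟨-, -, -, -, -, -, -, ⟨x, hx, -⟩ | ⟨y, hy, -⟩, -⟩ := h
    exacts [⟨x, hx⟩, (notMem_empty y (hSj ▸ hy)).elim]
  refine ⟨hSj, x, eq_singleton_iff_unique_mem.2 ⟨hx, fun x' hx' => by_contra fun hne => ?_⟩⟩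
  have hDc : D.imset {i, x, x'} = 1 :=
    h.2.2.2.2.2.1 {x, x'} (insert_subset hx (singleton_subset_iff.2 hx')) (by simp)
  rw [imset_triple_eq_one_iff hG hD (h.adj_of_mem_left hD hx) (h.adj_of_mem_left hD hx')
    (Ne.symm hne)] at hDc
  exact (h.collider_of_mem_left hG hD hE hx).2 ⟨hDji, hDc.1⟩

theorem exists_reversed_arc (h : IsTurnPairWrt D E i j Si Sj) :
    ∃ u w, D.adj u w ∧ E.adj w u ∧ ∀ S : Finset V, (u ∈ S → w ∉ S) → E.imset S = D.imset S := by
  have hij := h.adj hD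
  rcases adj_or_adj_of_skeleton_eq hD hij with hDij | hDji
  · rcases adj_or_adj_of_skeleton_eq hE hij with hEij | hEji
    · obtain ⟨rfl, y, rfl⟩ := h.left_eq_empty_and_right_eq_singleton hG hD hE hEij
      have hy := mem_singleton_self y
      obtain ⟨⟨-, hDyj⟩, hEyj⟩ := h.collider_of_mem_right hG hD hE hy
      refine ⟨y, j, hDyj, (adj_or_adj_of_skeleton_eq hE (h.adj_of_mem_right hD hy)).resolve_right
        fun hyj => hEyj ⟨hEij, hyj⟩, fun S hS => h.imset_eq ?_⟩
      simp only [empty_union, mem_singleton, forall_eq]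
      exact fun hsub => hS (hsub (by simp)) (hsub (by simp))
    · exact ⟨i, j, hDij, hEji,
        fun S hS => h.imset_eq fun t _ hsub => hS (hsub (by simp)) (hsub (by simp))⟩
  · obtain ⟨rfl, x, rfl⟩ := h.right_eq_empty_and_left_eq_singleton hG hD hE hDji
    have hx := mem_singleton_self x
    obtain ⟨⟨-, hExi⟩, hDxi⟩ := h.collider_of_mem_left hG hD hE hx
    refine ⟨i, x, (adj_or_adj_of_skeleton_eq hD (h.adj_of_mem_left hD hx)).resolve_right
      fun hxi => hDxi ⟨hDji, hxi⟩, hExi, fun S hS => h.imset_eq ?_⟩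
    simp only [union_empty, mem_singleton, forall_eq]
    exact fun hsub => hS (hsub (by simp)) (hsub (by simp))

end IsTurnPairWrt

/-- **Turn pairs on trees are edge reversals.**  Assume `{D, E}` is a turn pair of DAGs
with common tree skeleton.  Then there are a DAG `𝒟` and nodes `i'`, `j'` such that `D`
and `𝒟` are Markov equivalent, `i' → j'` is an arrow of `𝒟`, the graph obtained from `𝒟`
by reversing `i' → j'` is a DAG, and it is Markov equivalent to `E`. -/
theorem turn_pair_is_edge_reversal {p : ℕ} (G : SimpleGraph (Fin p)) (htree : G.IsTree)
    (D E : DAG (Fin p)) (hD : D.skeleton = G) (hE : E.skeleton = G)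
    (hturn : IsTurnPair D E) :
    ∃ (𝒟 : DAG (Fin p)) (i' j' : Fin p),
      MarkovEquiv D 𝒟 ∧ 𝒟.adj i' j' ∧
      ∃ R : DAG (Fin p),
        (∀ a b, R.adj a b ↔ ((a = j' ∧ b = i') ∨ (𝒟.adj a b ∧ ¬ (a = i' ∧ b = j')))) ∧
        MarkovEquiv E R := by
  obtain ⟨i, j, Si, Sj, h⟩ := hturn
  obtain ⟨u, w, huw, hwu, himset⟩ :=
    h.exists_reversed_arc (htree.isAcyclic.cliqueFree le_rfl) hD hE
  exact DAG.exists_reversal_of_imset_eq htree.isAcyclic hD hE huw hwu himset
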